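/- arXiv:2411.09490 — 2 statements merged into one kernel-verified Lean document; each statement's English description precedes it below -/
import Mathlib

section
/- Let t, k, n be integers with t ≥ 0, k ≥ 1 and n ≥ 2k+t. Let ℱ ⊆ C([n], k+t) and 𝒢 ⊆ C([n], k) be cross-intersecting families. If ℱ is (t+1)-intersecting and |ℱ| ≥ 1, then |ℱ| + |𝒢| ≤ C(n, k) − C(n−k−t, k) + 1. -/
open Finset

namespace FranklFrankl



/-- A family is shifted (stable under all elementary left-shifts). -/
def Shifted (𝒜 : Finset (Finset ℕ)) : Prop :=
  ∀ A ∈ 𝒜, ∀ j ∈ A, ∀ i, 1 ≤ i → i < j → i ∉ A → insert i (A.erase j) ∈ 𝒜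

lemma compress_singleton {i j : ℕ} (hij : i ≠ j) (A : Finset ℕ) :
    UV.compress {i} {j} A = if i ∉ A ∧ j ∈ A then insert i (A.erase j) else A := by
  rw [UV.compress]
  by_cases h : i ∉ A ∧ j ∈ A
  · rw [if_pos, if_pos h]
    · ext x
      simp only [sup_eq_union, mem_sdiff, mem_union, mem_singleton, mem_insert, mem_erase]
      constructor
      · rintro ⟨h1 | h1, h2⟩
        · exact Or.inr ⟨h2, h1⟩
        · exact Or.inl h1
      · rintro (rfl | ⟨h1, h2⟩)
        · exact ⟨Or.inr rfl, hij⟩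
        · exact ⟨Or.inl h2, h1⟩
    · exact ⟨by simpa [disjoint_singleton_left] using h.1, by simpa using h.2⟩
  · rw [if_neg, if_neg h]
    intro hc
    exact h ⟨by simpa [disjoint_singleton_left] using hc.1, by simpa using hc.2⟩

lemma mem_shift_cases {i j : ℕ} (hij : i ≠ j) {𝒜 : Finset (Finset ℕ)} {A : Finset ℕ}
    (h : A ∈ UV.compression {i} {j} 𝒜) :
    (A ∈ 𝒜 ∧ UV.compress {i} {j} A ∈ 𝒜) ∨
      (A ∉ 𝒜 ∧ ∃ B ∈ 𝒜, i ∉ B ∧ j ∈ B ∧ A = insert i (B.erase j)) := by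
  rw [UV.mem_compression] at h
  rcases h with h | ⟨hA, B, hB, hBA⟩
  · exact Or.inl h
  · refine Or.inr ⟨hA, B, hB, ?_⟩
    rw [compress_singleton hij] at hBA
    by_cases hc : i ∉ B ∧ j ∈ B
    · rw [if_pos hc] at hBA
      exact ⟨hc.1, hc.2, hBA.symm⟩
    · rw [if_neg hc] at hBA
      exact absurd (hBA ▸ hB) hA



lemma mem_shiftSet {i j x : ℕ} {A : Finset ℕ} :
    x ∈ insert i (A.erase j) ↔ x = i ∨ (x ≠ j ∧ x ∈ A) := by
  simp [mem_insert, mem_erase]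

lemma card_shiftSet {i j : ℕ} {A : Finset ℕ} (hi : i ∉ A) (hj : j ∈ A) :
    (insert i (A.erase j)).card = A.card := by
  rw [card_insert_of_notMem (fun h => hi (mem_of_mem_erase h)), card_erase_of_mem hj]
  have := card_pos.2 ⟨j, hj⟩
  omega

lemma shiftSet_subset {i j n : ℕ} {A : Finset ℕ} (h1 : 1 ≤ i) (hij : i < j)
    (hA : A ⊆ Icc 1 n) (hj : j ∈ A) :
    insert i (A.erase j) ⊆ Icc 1 n := by
  intro x hx
  rcases mem_shiftSet.1 hx with rfl | ⟨_, hx⟩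
  · have := hA hj
    simp only [mem_Icc] at *
    omega
  · exact hA hx

/-- Compression preserves being a subfamily of `powersetCard r (Icc 1 n)`. -/
lemma shift_subset_powersetCard {i j n r : ℕ} (h1 : 1 ≤ i) (hij : i < j)
    {𝒜 : Finset (Finset ℕ)} (h𝒜 : 𝒜 ⊆ powersetCard r (Icc 1 n)) :
    UV.compression {i} {j} 𝒜 ⊆ powersetCard r (Icc 1 n) := by
  intro A hA
  rcases mem_shift_cases hij.ne hA with ⟨hA, _⟩ | ⟨_, B, hB, hiB, hjB, rfl⟩
  · exact h𝒜 hA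
  · obtain ⟨hBs, hBc⟩ := mem_powersetCard.1 (h𝒜 hB)
    exact mem_powersetCard.2 ⟨shiftSet_subset h1 hij hBs hjB, by rw [card_shiftSet hiB hjB, hBc]⟩

/-- Compression (of both families by the same pair) preserves cross-intersection. -/
lemma shift_cross {i j : ℕ} (hij : i ≠ j) {F G : Finset (Finset ℕ)}
    (h : ∀ A ∈ F, ∀ B ∈ G, (A ∩ B).Nonempty) :
    ∀ A ∈ UV.compression {i} {j} F, ∀ B ∈ UV.compression {i} {j} G, (A ∩ B).Nonempty := by
  have key : ∀ (F G : Finset (Finset ℕ)),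
      (∀ A ∈ F, ∀ B ∈ G, (A ∩ B).Nonempty) →
      ∀ A, (A ∈ F ∧ UV.compress {i} {j} A ∈ F) →
      ∀ B₀ ∈ G, i ∉ B₀ → j ∈ B₀ → (A ∩ insert i (B₀.erase j)).Nonempty := by
    intro F G h A ⟨hAF, hcA⟩ B₀ hB₀ hiB₀ hjB₀
    by_contra hempty
    rw [not_nonempty_iff_eq_empty] at hempty
    have hAB₀ : A ∩ B₀ ⊆ {j} := by
      intro x hx
      rw [mem_inter] at hx
      rw [mem_singleton]
      by_contra hxj
      have : x ∈ A ∩ insert i (B₀.erase j) :=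
        mem_inter.2 ⟨hx.1, mem_shiftSet.2 (Or.inr ⟨hxj, hx.2⟩)⟩
      simp [hempty] at this
    have hjA : j ∈ A := by
      obtain ⟨x, hx⟩ := h A hAF B₀ hB₀
      have := hAB₀ hx
      rw [mem_singleton] at this
      subst this
      exact (mem_inter.1 hx).1
    have hiA : i ∉ A := by
      intro hiA
      have : i ∈ A ∩ insert i (B₀.erase j) := mem_inter.2 ⟨hiA, mem_insert_self _ _⟩
      simp [hempty] at this
    rw [compress_singleton hij, if_pos ⟨hiA, hjA⟩] at hcA
    obtain ⟨x, hx⟩ := h _ hcA B₀ hB₀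
    rw [mem_inter, mem_shiftSet] at hx
    rcases hx.1 with rfl | ⟨hxj, hxA⟩
    · exact hiB₀ hx.2
    · have := hAB₀ (mem_inter.2 ⟨hxA, hx.2⟩)
      rw [mem_singleton] at this
      exact hxj this
  intro A hA B hB
  rcases mem_shift_cases hij hA with hAk | ⟨_, A₀, hA₀, hiA₀, hjA₀, rfl⟩ <;>
    rcases mem_shift_cases hij hB with hBk | ⟨_, B₀, hB₀, hiB₀, hjB₀, rfl⟩
  · exact h A hAk.1 B hBk.1
  · exact key F G h A hAk B₀ hB₀ hiB₀ hjB₀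
  · obtain ⟨x, hx⟩ := key G F (fun B hB A hA => by
      rw [inter_comm]; exact h A hA B hB) B hBk A₀ hA₀ hiA₀ hjA₀
    exact ⟨x, by rw [inter_comm]; exact hx⟩
  · exact ⟨i, mem_inter.2 ⟨mem_insert_self _ _, mem_insert_self _ _⟩⟩

/-- Compression preserves being `(t+1)`-intersecting. -/
lemma shift_int {i j t : ℕ} (hij : i ≠ j) {F : Finset (Finset ℕ)}
    (h : ∀ A ∈ F, ∀ B ∈ F, t + 1 ≤ (A ∩ B).card) :
    ∀ A ∈ UV.compression {i} {j} F, ∀ B ∈ UV.compression {i} {j} F,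
      t + 1 ≤ (A ∩ B).card := by
  have key : ∀ A, (A ∈ F ∧ UV.compress {i} {j} A ∈ F) →
      ∀ B₀ ∈ F, i ∉ B₀ → j ∈ B₀ → t + 1 ≤ (A ∩ insert i (B₀.erase j)).card := by
    intro A ⟨hAF, hcA⟩ B₀ hB₀ hiB₀ hjB₀
    by_cases hjA : j ∈ A
    · by_cases hiA : i ∈ A
      · -- i,j ∈ A : A ∩ S B₀ ⊇ insert i ((A∩B₀).erase j)
        calc t + 1 ≤ (A ∩ B₀).card := h A hAF B₀ hB₀
        _ = (insert i ((A ∩ B₀).erase j)).card :=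
            (card_shiftSet (fun hc => hiB₀ (mem_inter.1 hc).2)
              (mem_inter.2 ⟨hjA, hjB₀⟩)).symm
        _ ≤ (A ∩ insert i (B₀.erase j)).card := by
            apply card_le_card
            intro x hx
            rcases mem_shiftSet.1 hx with rfl | ⟨hxj, hx⟩
            · exact mem_inter.2 ⟨hiA, mem_insert_self _ _⟩
            · rw [mem_inter] at hx ⊢
              exact ⟨hx.1, mem_shiftSet.2 (Or.inr ⟨hxj, hx.2⟩)⟩
      · -- j ∈ A, i ∉ A : use compress A ∈ F
        rw [compress_singleton hij, if_pos ⟨hiA, hjA⟩] at hcA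
        have h2 := h _ hcA B₀ hB₀
        calc t + 1 ≤ ((insert i (A.erase j)) ∩ B₀).card := h2
        _ ≤ (A ∩ insert i (B₀.erase j)).card := by
            apply card_le_card
            intro x hx
            rw [mem_inter] at hx
            rcases mem_shiftSet.1 hx.1 with rfl | ⟨hxj, hxA⟩
            · exact absurd hx.2 hiB₀
            · exact mem_inter.2 ⟨hxA, mem_shiftSet.2 (Or.inr ⟨hxj, hx.2⟩)⟩
    · -- j ∉ A
      calc t + 1 ≤ (A ∩ B₀).card := h A hAF B₀ hB₀
      _ ≤ (A ∩ insert i (B₀.erase j)).card := by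
          apply card_le_card
          intro x hx
          rw [mem_inter] at hx ⊢
          exact ⟨hx.1, mem_shiftSet.2 (Or.inr ⟨fun hxj => hjA (hxj ▸ hx.1), hx.2⟩)⟩
  intro A hA B hB
  rcases mem_shift_cases hij hA with hAk | ⟨_, A₀, hA₀, hiA₀, hjA₀, rfl⟩ <;>
    rcases mem_shift_cases hij hB with hBk | ⟨_, B₀, hB₀, hiB₀, hjB₀, rfl⟩
  · exact h A hAk.1 B hBk.1
  · exact key A hAk B₀ hB₀ hiB₀ hjB₀
  · rw [inter_comm]; exact key B hBk A₀ hA₀ hiA₀ hjA₀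
  · calc t + 1 ≤ (A₀ ∩ B₀).card := h A₀ hA₀ B₀ hB₀
    _ = (insert i ((A₀ ∩ B₀).erase j)).card :=
        (card_shiftSet (fun hc => hiB₀ (mem_inter.1 hc).2)
          (mem_inter.2 ⟨hjA₀, hjB₀⟩)).symm
    _ ≤ (insert i (A₀.erase j) ∩ insert i (B₀.erase j)).card := by
        apply card_le_card
        intro x hx
        rcases mem_shiftSet.1 hx with rfl | ⟨hxj, hx⟩
        · exact mem_inter.2 ⟨mem_insert_self _ _, mem_insert_self _ _⟩
        · rw [mem_inter] at hx ⊢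
          exact ⟨mem_shiftSet.2 (Or.inr ⟨hxj, hx.1⟩), mem_shiftSet.2 (Or.inr ⟨hxj, hx.2⟩)⟩

def fmeasure (𝒜 : Finset (Finset ℕ)) : ℕ := ∑ A ∈ 𝒜, ∑ x ∈ A, x

lemma sum_shiftSet_lt {i j : ℕ} {A : Finset ℕ} (hij : i < j) (hi : i ∉ A) (hj : j ∈ A) :
    ∑ x ∈ insert i (A.erase j), x < ∑ x ∈ A, x := by
  rw [sum_insert (fun hc => hi (mem_of_mem_erase hc))]
  have h2 : ∑ x ∈ A.erase j, x + j = ∑ x ∈ A, x := sum_erase_add _ _ hj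
  omega

lemma fmeasure_decomp {i j : ℕ} (hij : i < j) (𝒜 : Finset (Finset ℕ)) :
    fmeasure (UV.compression {i} {j} 𝒜)
      = ∑ A ∈ 𝒜.filter (fun A => UV.compress {i} {j} A ∈ 𝒜), ∑ x ∈ A, x
        + ∑ A ∈ 𝒜.filter (fun A => UV.compress {i} {j} A ∉ 𝒜),
            ∑ x ∈ UV.compress {i} {j} A, x
      ∧ fmeasure 𝒜
      = ∑ A ∈ 𝒜.filter (fun A => UV.compress {i} {j} A ∈ 𝒜), ∑ x ∈ A, x
        + ∑ A ∈ 𝒜.filter (fun A => UV.compress {i} {j} A ∉ 𝒜), ∑ x ∈ A, x := by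
  constructor
  · have himg : {a ∈ 𝒜.image (UV.compress {i} {j}) | a ∉ 𝒜}
        = (𝒜.filter (fun A => UV.compress {i} {j} A ∉ 𝒜)).image (UV.compress {i} {j}) := by
      ext a
      simp only [mem_filter, mem_image]
      constructor
      · rintro ⟨⟨b, hb, rfl⟩, ha⟩
        exact ⟨b, ⟨hb, ha⟩, rfl⟩
      · rintro ⟨b, ⟨hb, hcb⟩, rfl⟩
        exact ⟨⟨b, hb, rfl⟩, hcb⟩
    have hdisj : Disjoint (𝒜.filter (fun A => UV.compress {i} {j} A ∈ 𝒜))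
        ((𝒜.filter (fun A => UV.compress {i} {j} A ∉ 𝒜)).image (UV.compress {i} {j})) := by
      rw [disjoint_right]
      rintro a ha ha'
      rw [mem_image] at ha
      obtain ⟨b, hb, rfl⟩ := ha
      rw [mem_filter] at hb ha'
      exact hb.2 ha'.1
    rw [fmeasure, UV.compression, himg, sum_union hdisj]
    congr 1
    rw [sum_image]
    intro x hx y hy hxy
    exact UV.compress_injOn (by simpa using hx) (by simpa using hy) hxy
  · rw [fmeasure, sum_filter_add_sum_filter_not]

lemma fmeasure_shift_le {i j : ℕ} (hij : i < j) (𝒜 : Finset (Finset ℕ)) :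
    fmeasure (UV.compression {i} {j} 𝒜) ≤ fmeasure 𝒜 := by
  obtain ⟨h1, h2⟩ := fmeasure_decomp hij 𝒜
  rw [h1, h2]
  refine Nat.add_le_add_left (sum_le_sum ?_) _
  intro A hA
  rw [mem_filter] at hA
  rw [compress_singleton hij.ne] at hA ⊢
  by_cases hc : i ∉ A ∧ j ∈ A
  · rw [if_pos hc]
    exact (sum_shiftSet_lt hij hc.1 hc.2).le
  · rw [if_neg hc] at hA
    exact absurd hA.1 hA.2

lemma fmeasure_shift_lt {i j : ℕ} (hij : i < j) {𝒜 : Finset (Finset ℕ)}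
    {A : Finset ℕ} (hA : A ∈ 𝒜) (hw : UV.compress {i} {j} A ∉ 𝒜) :
    fmeasure (UV.compression {i} {j} 𝒜) < fmeasure 𝒜 := by
  obtain ⟨h1, h2⟩ := fmeasure_decomp hij 𝒜
  rw [h1, h2]
  refine Nat.add_lt_add_left (sum_lt_sum_of_nonempty ⟨A, mem_filter.2 ⟨hA, hw⟩⟩ ?_) _
  intro B hB
  rw [mem_filter] at hB
  rw [compress_singleton hij.ne] at hB ⊢
  by_cases hc : i ∉ B ∧ j ∈ B
  · rw [if_pos hc]
    exact sum_shiftSet_lt hij hc.1 hc.2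
  · rw [if_neg hc] at hB
    exact absurd hB.1 hB.2

lemma exists_shifted (t k n : ℕ) : ∀ (M : ℕ) (F G : Finset (Finset ℕ)),
    fmeasure F + fmeasure G ≤ M →
    F ⊆ powersetCard (k + t) (Icc 1 n) → G ⊆ powersetCard k (Icc 1 n) →
    (∀ A ∈ F, ∀ B ∈ G, (A ∩ B).Nonempty) →
    (∀ A ∈ F, ∀ A' ∈ F, t + 1 ≤ (A ∩ A').card) →
    ∃ F' G', F' ⊆ powersetCard (k + t) (Icc 1 n) ∧ G' ⊆ powersetCard k (Icc 1 n) ∧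
      (∀ A ∈ F', ∀ B ∈ G', (A ∩ B).Nonempty) ∧
      (∀ A ∈ F', ∀ A' ∈ F', t + 1 ≤ (A ∩ A').card) ∧
      F'.card = F.card ∧ G'.card = G.card ∧ Shifted F' ∧ Shifted G' := by
  intro M
  induction M with
  | zero =>
    intro F G hM hF hG hcross hint
    have hgen : ∀ (H : Finset (Finset ℕ)), fmeasure H = 0 → Shifted H := by
      intro H hH A hA j hj i h1 hij hiA
      exfalso
      have h2 : j ≤ ∑ x ∈ A, x := single_le_sum (f := fun x => x) (fun _ _ => Nat.zero_le _) hj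
      have h3 : (∑ x ∈ A, x) ≤ fmeasure H :=
        single_le_sum (f := fun A => ∑ x ∈ A, x) (fun _ _ => Nat.zero_le _) hA
      omega
    exact ⟨F, G, hF, hG, hcross, hint, rfl, rfl, hgen F (by omega), hgen G (by omega)⟩
  | succ M ih =>
    intro F G hM hF hG hcross hint
    by_cases hS : Shifted F ∧ Shifted G
    · exact ⟨F, G, hF, hG, hcross, hint, rfl, rfl, hS.1, hS.2⟩
    rw [not_and_or] at hS
    have hwit : ∃ i j, 1 ≤ i ∧ i < j ∧
        (fmeasure (UV.compression {i} {j} F) + fmeasure (UV.compression {i} {j} G)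
          < fmeasure F + fmeasure G) := by
      rcases hS with hS | hS
      · simp only [Shifted, not_forall] at hS
        obtain ⟨A, hA, j, hj, i, h1, hij, hiA, hni⟩ := hS
        refine ⟨i, j, h1, hij, ?_⟩
        have hclt : UV.compress {i} {j} A ∉ F := by
          rw [compress_singleton hij.ne, if_pos ⟨hiA, hj⟩]
          exact hni
        exact Nat.add_lt_add_of_lt_of_le (fmeasure_shift_lt hij hA hclt)
          (fmeasure_shift_le hij G)
      · simp only [Shifted, not_forall] at hS
        obtain ⟨A, hA, j, hj, i, h1, hij, hiA, hni⟩ := hS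
        refine ⟨i, j, h1, hij, ?_⟩
        have hclt : UV.compress {i} {j} A ∉ G := by
          rw [compress_singleton hij.ne, if_pos ⟨hiA, hj⟩]
          exact hni
        exact Nat.add_lt_add_of_le_of_lt (fmeasure_shift_le hij F)
          (fmeasure_shift_lt hij hA hclt)
    obtain ⟨i, j, h1, hij, hlt⟩ := hwit
    obtain ⟨F', G', h₁, h₂, h₃, h₄, h₅, h₆, h₇, h₈⟩ :=
      ih (UV.compression {i} {j} F) (UV.compression {i} {j} G) (by omega)
        (shift_subset_powersetCard h1 hij hF) (shift_subset_powersetCard h1 hij hG)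
        (shift_cross hij.ne hcross) (shift_int hij.ne hint)
    exact ⟨F', G', h₁, h₂, h₃, h₄, by rw [h₅, UV.card_compression],
      by rw [h₆, UV.card_compression], h₇, h₈⟩

lemma exists_notMem {s A : Finset ℕ} (h : A.card < s.card) : ∃ x ∈ s, x ∉ A := by
  by_contra hc
  push_neg at hc
  exact absurd (card_le_card hc) (by omega)

lemma shifted_bound : ∀ n : ℕ, ∀ t k : ℕ, ∀ F G : Finset (Finset ℕ),
    1 ≤ k → 2 * k + t ≤ n →
    F ⊆ powersetCard (k + t) (Icc 1 n) → G ⊆ powersetCard k (Icc 1 n) →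
    (∀ A ∈ F, ∀ B ∈ G, (A ∩ B).Nonempty) →
    (∀ A ∈ F, ∀ A' ∈ F, t + 1 ≤ (A ∩ A').card) →
    F.Nonempty → Shifted F → Shifted G →
    F.card + G.card + (n - k - t).choose k ≤ n.choose k + 1 := by
  intro n
  induction n using Nat.strong_induction_on with
  | _ n IH =>
  intro t k F G hk hn hF hG hcross hint hFne hSF hSG
  have hFic : ∀ A ∈ F, A ⊆ Icc 1 n ∧ A.card = k + t := by
    intro A hA; exact mem_powersetCard.1 (hF hA)
  have hGic : ∀ B ∈ G, B ⊆ Icc 1 n ∧ B.card = k := by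
    intro B hB; exact mem_powersetCard.1 (hG hB)
  -- Case k = 1
  rcases Nat.lt_or_ge k 2 with hk1 | hk2
  · have hk1 : k = 1 := by omega
    subst hk1
    obtain ⟨A₀, hA₀⟩ := hFne
    have hFsingle : F = {A₀} := by
      apply Subset.antisymm
      · intro A hA
        have h1 := hint A hA A₀ hA₀
        have h2 : A ∩ A₀ = A₀ := by
          apply eq_of_subset_of_card_le inter_subset_right
          rw [(hFic A₀ hA₀).2]; omega
        have h3 : A₀ ⊆ A := by rw [← h2]; exact inter_subset_left
        rw [mem_singleton]
        exact (eq_of_subset_of_card_le h3 (by rw [(hFic A hA).2, (hFic A₀ hA₀).2])).symm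
      · intro A hA; rw [mem_singleton] at hA; subst hA; exact hA₀
    have hGsub : G ⊆ powersetCard 1 A₀ := by
      intro B hB
      obtain ⟨x, hx⟩ := hcross A₀ hA₀ B hB
      rw [mem_inter] at hx
      obtain ⟨y, rfl⟩ := card_eq_one.1 (hGic B hB).2
      rw [mem_singleton] at hx
      exact mem_powersetCard.2 ⟨singleton_subset_iff.2 (hx.2 ▸ hx.1), card_singleton _⟩
    have hGcard : G.card ≤ 1 + t := by
      calc G.card ≤ (powersetCard 1 A₀).card := card_le_card hGsub
      _ = (1 + t).choose 1 := by rw [card_powersetCard, (hFic A₀ hA₀).2]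
      _ = 1 + t := by rw [Nat.choose_one_right]
    rw [hFsingle, card_singleton, Nat.choose_one_right, Nat.choose_one_right]
    omega
  -- now k ≥ 2
  obtain ⟨k'', rfl⟩ : ∃ k'', k = k'' + 2 := ⟨k - 2, by omega⟩
  rcases Nat.eq_or_lt_of_le hn with hbase | hstep
  · -- base case n = 2k + t
    have h1 : n - (k'' + 2) - t = k'' + 2 := by omega
    rw [h1, Nat.choose_self]
    have himg : F.image (fun A => Icc 1 n \ A) ⊆ powersetCard (k'' + 2) (Icc 1 n) \ G := by
      intro X hX
      rw [mem_image] at hX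
      obtain ⟨A, hA, rfl⟩ := hX
      rw [mem_sdiff]
      constructor
      · refine mem_powersetCard.2 ⟨sdiff_subset, ?_⟩
        rw [card_sdiff_of_subset (hFic A hA).1, (hFic A hA).2, Nat.card_Icc]
        omega
      · intro hXG
        obtain ⟨x, hx⟩ := hcross A hA _ hXG
        rw [mem_inter, mem_sdiff] at hx
        exact hx.2.2 hx.1
    have hinj : Set.InjOn (fun A => Icc 1 n \ A) ↑F := by
      intro A hA B hB h
      have hA' : Icc 1 n ∩ A = A := inter_eq_right.2 (hFic A (mem_coe.1 hA)).1
      have hB' : Icc 1 n ∩ B = B := inter_eq_right.2 (hFic B (mem_coe.1 hB)).1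
      calc A = Icc 1 n \ (Icc 1 n \ A) := by rw [sdiff_sdiff_self_left, hA']
      _ = Icc 1 n \ (Icc 1 n \ B) := by rw [show Icc 1 n \ A = Icc 1 n \ B from h]
      _ = B := by rw [sdiff_sdiff_self_left, hB']
    have hFcard : F.card ≤ (powersetCard (k'' + 2) (Icc 1 n)).card - G.card := by
      calc F.card = (F.image (fun A => Icc 1 n \ A)).card := (card_image_of_injOn hinj).symm
      _ ≤ (powersetCard (k'' + 2) (Icc 1 n) \ G).card := card_le_card himg
      _ = (powersetCard (k'' + 2) (Icc 1 n)).card - G.card := card_sdiff_of_subset hG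
    have hGcard : G.card ≤ (powersetCard (k'' + 2) (Icc 1 n)).card := card_le_card hG
    have hpc : (powersetCard (k'' + 2) (Icc 1 n)).card = n.choose (k'' + 2) := by
      rw [card_powersetCard, Nat.card_Icc]
      congr 1
    omega
  -- step case n > 2k + t
  obtain ⟨n', rfl⟩ : ∃ n', n = n' + 1 := ⟨n - 1, by omega⟩

  have hstep' : 2 * k'' + t + 4 ≤ n' := by omega
  classical
  set F₀ := F.filter (fun A => ¬ n' + 1 ∈ A) with hF₀d
  set Fn := F.filter (fun A => n' + 1 ∈ A) with hFnd
  set F₁ := Fn.image (fun A => A.erase (n' + 1)) with hF₁d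
  set G₀ := G.filter (fun B => ¬ n' + 1 ∈ B) with hG₀d
  set Gn := G.filter (fun B => n' + 1 ∈ B) with hGnd
  set G₁ := Gn.image (fun B => B.erase (n' + 1)) with hG₁d
  have hFnmem : ∀ A ∈ Fn, A ∈ F ∧ n' + 1 ∈ A := by
    intro A hA; rw [hFnd] at hA; exact mem_filter.1 hA
  have hF₀mem : ∀ A ∈ F₀, A ∈ F ∧ n' + 1 ∉ A := by
    intro A hA; rw [hF₀d] at hA; exact mem_filter.1 hA
  have hGnmem : ∀ B ∈ Gn, B ∈ G ∧ n' + 1 ∈ B := by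
    intro B hB; rw [hGnd] at hB; exact mem_filter.1 hB
  have hG₀mem : ∀ B ∈ G₀, B ∈ G ∧ n' + 1 ∉ B := by
    intro B hB; rw [hG₀d] at hB; exact mem_filter.1 hB
  have hF₁mem : ∀ X ∈ F₁, ∃ A, A ∈ F ∧ n' + 1 ∈ A ∧ X = A.erase (n' + 1) := by
    intro X hX; rw [hF₁d] at hX
    obtain ⟨A, hA, rfl⟩ := mem_image.1 hX
    exact ⟨A, (hFnmem A hA).1, (hFnmem A hA).2, rfl⟩
  have hG₁mem : ∀ Y ∈ G₁, ∃ B, B ∈ G ∧ n' + 1 ∈ B ∧ Y = B.erase (n' + 1) := by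
    intro Y hY; rw [hG₁d] at hY
    obtain ⟨B, hB, rfl⟩ := mem_image.1 hY
    exact ⟨B, (hGnmem B hB).1, (hGnmem B hB).2, rfl⟩
  -- cardinality splittings
  have hFsplit : Fn.card + F₀.card = F.card := by
    rw [hFnd, hF₀d]; exact card_filter_add_card_filter_not _
  have hGsplit : Gn.card + G₀.card = G.card := by
    rw [hGnd, hG₀d]; exact card_filter_add_card_filter_not _
  have hF₁card : F₁.card = Fn.card := by
    rw [hF₁d]
    apply card_image_of_injOn
    intro A hA B hB h
    simp only at h
    rw [← insert_erase (hFnmem A hA).2, ← insert_erase (hFnmem B hB).2, h]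
  have hG₁card : G₁.card = Gn.card := by
    rw [hG₁d]
    apply card_image_of_injOn
    intro A hA B hB h
    simp only at h
    rw [← insert_erase (hGnmem A hA).2, ← insert_erase (hGnmem B hB).2, h]
  -- subset facts
  have hsubIcc : ∀ (A : Finset ℕ), A ⊆ Icc 1 (n' + 1) → n' + 1 ∉ A → A ⊆ Icc 1 n' := by
    intro A h1 h2 x hx
    have h3 := h1 hx
    rw [mem_Icc] at h3 ⊢
    have : x ≠ n' + 1 := fun h => h2 (h ▸ hx)
    omega
  have herasesub : ∀ (A : Finset ℕ), A ⊆ Icc 1 (n' + 1) → A.erase (n' + 1) ⊆ Icc 1 n' :=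
    fun A h1 => hsubIcc _ (fun x hx => h1 (mem_of_mem_erase hx)) (notMem_erase _ _)
  have hF₀sub : F₀ ⊆ powersetCard (k'' + 2 + t) (Icc 1 n') := by
    intro A hA
    obtain ⟨hAF, hAn⟩ := hF₀mem A hA
    exact mem_powersetCard.2 ⟨hsubIcc A (hFic A hAF).1 hAn, (hFic A hAF).2⟩
  have hG₀sub : G₀ ⊆ powersetCard (k'' + 2) (Icc 1 n') := by
    intro B hB
    obtain ⟨hBG, hBn⟩ := hG₀mem B hB
    exact mem_powersetCard.2 ⟨hsubIcc B (hGic B hBG).1 hBn, (hGic B hBG).2⟩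
  have hF₁sub : F₁ ⊆ powersetCard (k'' + 1 + t) (Icc 1 n') := by
    intro X hX
    obtain ⟨A, hAF, hAn, rfl⟩ := hF₁mem X hX
    refine mem_powersetCard.2 ⟨herasesub A (hFic A hAF).1, ?_⟩
    rw [card_erase_of_mem hAn, (hFic A hAF).2]
    omega
  have hG₁sub : G₁ ⊆ powersetCard (k'' + 1) (Icc 1 n') := by
    intro Y hY
    obtain ⟨B, hBG, hBn, rfl⟩ := hG₁mem Y hY
    refine mem_powersetCard.2 ⟨herasesub B (hGic B hBG).1, ?_⟩
    rw [card_erase_of_mem hBn, (hGic B hBG).2]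
    omega
  -- shiftedness inheritance
  have hSF₀ : Shifted F₀ := by
    intro A hA j hj i h1 hij hiA
    obtain ⟨hAF, hAn⟩ := hF₀mem A hA
    have hjle := (hFic A hAF).1 hj
    rw [mem_Icc] at hjle
    rw [hF₀d, mem_filter]
    refine ⟨hSF A hAF j hj i h1 hij hiA, fun hc => ?_⟩
    rcases mem_insert.1 hc with h | h
    · omega
    · exact hAn (mem_of_mem_erase h)
  have hSG₀ : Shifted G₀ := by
    intro A hA j hj i h1 hij hiA
    obtain ⟨hAG, hAn⟩ := hG₀mem A hA
    have hjle := (hGic A hAG).1 hj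
    rw [mem_Icc] at hjle
    rw [hG₀d, mem_filter]
    refine ⟨hSG A hAG j hj i h1 hij hiA, fun hc => ?_⟩
    rcases mem_insert.1 hc with h | h
    · omega
    · exact hAn (mem_of_mem_erase h)
  have herase_shift : ∀ (A : Finset ℕ) (i j : ℕ), i ≠ n' + 1 →
      (insert i (A.erase j)).erase (n' + 1) = insert i ((A.erase (n' + 1)).erase j) := by
    intro A i j hin
    ext x
    rw [mem_erase, mem_insert, mem_insert, mem_erase, mem_erase, mem_erase]
    constructor
    · rintro ⟨hxn, rfl | ⟨hxj, hxA⟩⟩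
      · exact Or.inl rfl
      · exact Or.inr ⟨hxj, hxn, hxA⟩
    · rintro (rfl | ⟨hxj, hxn, hxA⟩)
      · exact ⟨hin, Or.inl rfl⟩
      · exact ⟨hxn, Or.inr ⟨hxj, hxA⟩⟩
  have hSF₁ : Shifted F₁ := by
    intro X hX j hj i h1 hij hiX
    obtain ⟨A, hAF, hAn, rfl⟩ := hF₁mem X hX
    have hjA : j ∈ A := mem_of_mem_erase hj
    have hjn : j ≠ n' + 1 := ne_of_mem_erase hj
    have hjle := (hFic A hAF).1 hjA
    rw [mem_Icc] at hjle
    have hin : i ≠ n' + 1 := by omega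
    have hiA : i ∉ A := fun hc => hiX (mem_erase.2 ⟨hin, hc⟩)
    have hmem := hSF A hAF j hjA i h1 hij hiA
    rw [hF₁d, mem_image]
    refine ⟨insert i (A.erase j), ?_, ?_⟩
    · rw [hFnd, mem_filter]
      exact ⟨hmem, mem_insert.2 (Or.inr (mem_erase.2 ⟨fun h => hjn h.symm, hAn⟩))⟩
    · exact herase_shift A i j hin
  have hSG₁ : Shifted G₁ := by
    intro X hX j hj i h1 hij hiX
    obtain ⟨A, hAG, hAn, rfl⟩ := hG₁mem X hX
    have hjA : j ∈ A := mem_of_mem_erase hj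
    have hjn : j ≠ n' + 1 := ne_of_mem_erase hj
    have hjle := (hGic A hAG).1 hjA
    rw [mem_Icc] at hjle
    have hin : i ≠ n' + 1 := by omega
    have hiA : i ∉ A := fun hc => hiX (mem_erase.2 ⟨hin, hc⟩)
    have hmem := hSG A hAG j hjA i h1 hij hiA
    rw [hG₁d, mem_image]
    refine ⟨insert i (A.erase j), ?_, ?_⟩
    · rw [hGnd, mem_filter]
      exact ⟨hmem, mem_insert.2 (Or.inr (mem_erase.2 ⟨fun h => hjn h.symm, hAn⟩))⟩
    · exact herase_shift A i j hin
  -- F₀ is nonempty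
  have hF₀ne : F₀.Nonempty := by
    obtain ⟨A, hA⟩ := hFne
    by_cases hn' : n' + 1 ∈ A
    · have hcard : A.card < (Icc 1 n').card := by
        rw [(hFic A hA).2, Nat.card_Icc]
        omega
      obtain ⟨i, hiI, hiA⟩ := exists_notMem hcard
      rw [mem_Icc] at hiI
      have hmem := hSF A hA (n' + 1) hn' i hiI.1 (by omega) hiA
      refine ⟨insert i (A.erase (n' + 1)), ?_⟩
      rw [hF₀d, mem_filter]
      refine ⟨hmem, fun hc => ?_⟩
      rcases mem_insert.1 hc with h | h
      · omega
      · exact (notMem_erase _ _) h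
    · exact ⟨A, by rw [hF₀d, mem_filter]; exact ⟨hA, hn'⟩⟩
  -- apply IH to (F₀, G₀)
  have hIH0 := IH n' (by omega) t (k'' + 2) F₀ G₀ (by omega) (by omega) hF₀sub hG₀sub
    (fun A hA B hB => hcross A (hF₀mem A hA).1 B (hG₀mem B hB).1)
    (fun A hA B hB => hint A (hF₀mem A hA).1 B (hF₀mem B hB).1)
    hF₀ne hSF₀ hSG₀
  -- cross-intersecting property of (F₁, G₁), and of (F, G₁) with members of F₀
  have hcross1 : ∀ X ∈ F₁, ∀ Y ∈ G₁, (X ∩ Y).Nonempty := by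
    intro X hX Y hY
    obtain ⟨A, hAF, hAn, rfl⟩ := hF₁mem X hX
    obtain ⟨B, hBG, hBn, rfl⟩ := hG₁mem Y hY
    by_contra hempty
    rw [not_nonempty_iff_eq_empty] at hempty
    have hABcard : ((A.erase (n' + 1)) ∪ (B.erase (n' + 1))).card < (Icc 1 n').card := by
      refine lt_of_le_of_lt (card_union_le _ _) ?_
      rw [card_erase_of_mem hAn, card_erase_of_mem hBn, (hFic A hAF).2, (hGic B hBG).2,
        Nat.card_Icc]
      omega
    obtain ⟨i, hiI, hiAB⟩ := exists_notMem hABcard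
    rw [mem_Icc] at hiI
    rw [mem_union] at hiAB
    push_neg at hiAB
    have hiB : i ∉ B := fun hc => hiAB.2 (mem_erase.2 ⟨by omega, hc⟩)
    have hmem := hSG B hBG (n' + 1) hBn i hiI.1 (by omega) hiB
    obtain ⟨x, hx⟩ := hcross A hAF _ hmem
    rw [mem_inter] at hx
    rcases mem_insert.1 hx.2 with h | h
    · subst h
      exact hiAB.1 (mem_erase.2 ⟨by omega, hx.1⟩)
    · have hxn : x ≠ n' + 1 := ne_of_mem_erase h
      have : x ∈ (A.erase (n' + 1)) ∩ (B.erase (n' + 1)) :=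
        mem_inter.2 ⟨mem_erase.2 ⟨hxn, hx.1⟩, mem_erase.2 ⟨hxn, mem_of_mem_erase h⟩⟩
      rw [hempty] at this
      exact notMem_empty _ this
  -- (t+1)-intersection property of F₁
  have hint1 : ∀ X ∈ F₁, ∀ Y ∈ F₁, t + 1 ≤ (X ∩ Y).card := by
    intro X hX Y hY
    obtain ⟨A, hAF, hAn, rfl⟩ := hF₁mem X hX
    obtain ⟨B, hBF, hBn, rfl⟩ := hF₁mem Y hY
    have hABint : (A.erase (n' + 1)) ∩ (B.erase (n' + 1)) = (A ∩ B).erase (n' + 1) := by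
      ext x
      rw [mem_inter, mem_erase, mem_erase, mem_erase, mem_inter]
      tauto
    have hABn : n' + 1 ∈ A ∩ B := mem_inter.2 ⟨hAn, hBn⟩
    have hcard0 : t + 1 ≤ (A ∩ B).card := hint A hAF B hBF
    rw [hABint, card_erase_of_mem hABn]
    by_contra hlt
    push_neg at hlt
    -- (A ∩ B).card = t + 1 exactly
    have hABcard : (A ∩ B).card = t + 1 := by omega
    have hucard : ((A.erase (n' + 1)) ∪ (B.erase (n' + 1))).card < (Icc 1 n').card := by
      rw [Nat.card_Icc]
      have h1 : ((A.erase (n' + 1)) ∪ (B.erase (n' + 1))).card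
          ≤ A.card + B.card - (A ∩ B).card := by
        have h2 : (A.erase (n' + 1)) ∪ (B.erase (n' + 1)) ⊆ (A ∪ B).erase (n' + 1) := by
          intro x hx
          rw [mem_erase, mem_union]
          rcases mem_union.1 hx with h | h
          · exact ⟨ne_of_mem_erase h, Or.inl (mem_of_mem_erase h)⟩
          · exact ⟨ne_of_mem_erase h, Or.inr (mem_of_mem_erase h)⟩
        calc ((A.erase (n' + 1)) ∪ (B.erase (n' + 1))).card
            ≤ ((A ∪ B).erase (n' + 1)).card := card_le_card h2
        _ ≤ (A ∪ B).card := card_le_card (erase_subset _ _)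
        _ = A.card + B.card - (A ∩ B).card := by
            have := card_union_add_card_inter A B
            omega
      rw [(hFic A hAF).2, (hFic B hBF).2, hABcard] at h1
      omega
    obtain ⟨i, hiI, hiAB⟩ := exists_notMem hucard
    rw [mem_Icc] at hiI
    rw [mem_union] at hiAB
    push_neg at hiAB
    have hiB : i ∉ B := fun hc => hiAB.2 (mem_erase.2 ⟨by omega, hc⟩)
    have hmem := hSF B hBF (n' + 1) hBn i hiI.1 (by omega) hiB
    have hintAB := hint A hAF _ hmem
    -- A ∩ (insert i (B.erase (n'+1))) = (A ∩ B).erase (n'+1)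
    have heq : A ∩ insert i (B.erase (n' + 1)) = (A ∩ B).erase (n' + 1) := by
      ext x
      rw [mem_inter, mem_insert, mem_erase, mem_erase, mem_inter]
      constructor
      · rintro ⟨hxA, rfl | ⟨hxn, hxB⟩⟩
        · exact absurd (mem_erase.2 ⟨by omega, hxA⟩) hiAB.1
        · exact ⟨hxn, hxA, hxB⟩
      · rintro ⟨hxn, hxA, hxB⟩
        exact ⟨hxA, Or.inr ⟨hxn, hxB⟩⟩
    rw [heq, card_erase_of_mem hABn, hABcard] at hintAB
    omega
  -- bound for F₁.card + G₁.card
  have hmain1 : F₁.card + G₁.card + (n' - (k'' + 1) - t - 1).choose (k'' + 1)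
      ≤ n'.choose (k'' + 1) := by
    by_cases hF₁ne : F₁.Nonempty
    · have hIH1 := IH n' (by omega) t (k'' + 1) F₁ G₁ (by omega) (by omega) hF₁sub hG₁sub
        hcross1 hint1 hF₁ne hSF₁ hSG₁
      have e3 : n' - (k'' + 1) - t = (n' - (k'' + 1) - t - 1) + 1 := by omega
      rw [e3, Nat.choose_succ_succ'] at hIH1
      have hpos : 1 ≤ (n' - (k'' + 1) - t - 1).choose k'' :=
        Nat.choose_pos (by omega)
      omega
    · -- F₁ empty
      have hF₁0 : F₁.card = 0 := by
        rw [card_eq_zero, ← not_nonempty_iff_eq_empty]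
        exact hF₁ne
      obtain ⟨A₀, hA₀⟩ := hF₀ne
      obtain ⟨hA₀F, hA₀n⟩ := hF₀mem A₀ hA₀
      have hA₀sub : A₀ ⊆ Icc 1 n' := hsubIcc A₀ (hFic A₀ hA₀F).1 hA₀n
      have hG₁sub2 : G₁ ⊆ powersetCard (k'' + 1) (Icc 1 n')
          \ powersetCard (k'' + 1) (Icc 1 n' \ A₀) := by
        intro Y hY
        rw [mem_sdiff]
        refine ⟨hG₁sub hY, fun hc => ?_⟩
        obtain ⟨B, hBG, hBn, rfl⟩ := hG₁mem Y hY
        obtain ⟨x, hx⟩ := hcross A₀ hA₀F B hBG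
        rw [mem_inter] at hx
        have hxn : x ≠ n' + 1 := fun h => hA₀n (h ▸ hx.1)
        have hxY : x ∈ B.erase (n' + 1) := mem_erase.2 ⟨hxn, hx.2⟩
        have := (mem_powersetCard.1 hc).1 hxY
        rw [mem_sdiff] at this
        exact this.2 hx.1
      have hsmall_sub : powersetCard (k'' + 1) (Icc 1 n' \ A₀)
          ⊆ powersetCard (k'' + 1) (Icc 1 n') := powersetCard_mono sdiff_subset
      have hG₁le : G₁.card ≤ (powersetCard (k'' + 1) (Icc 1 n')).card
          - (powersetCard (k'' + 1) (Icc 1 n' \ A₀)).card := by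
        calc G₁.card ≤ _ := card_le_card hG₁sub2
        _ = _ := card_sdiff_of_subset hsmall_sub
      have hc1 : (powersetCard (k'' + 1) (Icc 1 n')).card = n'.choose (k'' + 1) := by
        rw [card_powersetCard, Nat.card_Icc]
        congr 1
      have hc2 : (powersetCard (k'' + 1) (Icc 1 n' \ A₀)).card
          = (n' - (k'' + 1) - t - 1).choose (k'' + 1) := by
        rw [card_powersetCard, card_sdiff_of_subset hA₀sub, Nat.card_Icc, (hFic A₀ hA₀F).2]
        congr 1
        omega
      have hc3 := card_le_card hsmall_sub
      rw [hc1, hc2] at hG₁le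
      rw [hc1, hc2] at hc3
      omega
  -- final arithmetic
  set m := n' - (k'' + 2) - t with hmd
  have harg : n' - (k'' + 1) - t - 1 = m := by omega
  rw [harg] at hmain1
  have hgoalarg : n' + 1 - (k'' + 2) - t = m + 1 := by omega
  rw [hgoalarg]
  have eP1 : (m + 1).choose (k'' + 2) = m.choose (k'' + 1) + m.choose (k'' + 2) :=
    Nat.choose_succ_succ' m (k'' + 1)
  have eP2 : (n' + 1).choose (k'' + 2) = n'.choose (k'' + 1) + n'.choose (k'' + 2) :=
    Nat.choose_succ_succ' n' (k'' + 1)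
  omega


end FranklFrankl

open Finset

theorem frankl_t_plus_one_intersecting_bound
    (t k n : ℕ) (hk : 1 ≤ k) (hn : 2 * k + t ≤ n)
    (F G : Finset (Finset ℕ))
    (hF : F ⊆ powersetCard (k + t) (Icc 1 n))
    (hG : G ⊆ powersetCard k (Icc 1 n))
    (hcross : ∀ A ∈ F, ∀ B ∈ G, (A ∩ B).Nonempty)
    (hint : ∀ A ∈ F, ∀ A' ∈ F, t + 1 ≤ (A ∩ A').card)
    (hne : 1 ≤ F.card) :
    F.card + G.card ≤ Nat.choose n k - Nat.choose (n - k - t) k + 1 := by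
  obtain ⟨F', G', hF', hG', hcross', hint', hFc, hGc, hSF, hSG⟩ :=
    FranklFrankl.exists_shifted t k n
      (FranklFrankl.fmeasure F + FranklFrankl.fmeasure G) F G le_rfl hF hG hcross hint
  have hne' : F'.Nonempty := card_pos.1 (by omega)
  have hb := FranklFrankl.shifted_bound n t k F' G' hk hn hF' hG' hcross' hint' hne' hSF hSG
  have hle : (n - k - t).choose k ≤ n.choose k := Nat.choose_le_choose k (by omega)
  omega
end

section
/- Let k, ℓ, n be integers with k ≥ ℓ ≥ 1 and n ≥ k+ℓ. Let ℱ ⊆ C([n], k) and 𝒢 ⊆ C([n], ℓ) be cross-intersecting families. Then |ℱ| + |𝒢| ≤ C(n, k). -/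
open Finset

theorem cross_intersecting_sum_bound
    (k l n : ℕ) (hl : 1 ≤ l) (hlk : l ≤ k) (hn : k + l ≤ n)
    (F G : Finset (Finset ℕ))
    (hF : F ⊆ powersetCard k (Icc 1 n))
    (hG : G ⊆ powersetCard l (Icc 1 n))
    (hcross : ∀ A ∈ F, ∀ B ∈ G, (A ∩ B).Nonempty) :
    F.card + G.card ≤ Nat.choose n k := by
  classical
  set S : Finset ℕ := Icc 1 n with hS
  have hScard : S.card = n := by simp [hS]
  set D : Finset (Finset ℕ) :=
    (powersetCard k S).filter (fun A => ∃ B ∈ G, Disjoint A B) with hD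
  -- F and D are disjoint
  have hFD : Disjoint F D := by
    rw [Finset.disjoint_left]
    intro A hA hA'
    rw [hD, Finset.mem_filter] at hA'
    obtain ⟨-, B, hB, hdisj⟩ := hA'
    obtain ⟨x, hx⟩ := hcross A hA B hB
    rw [Finset.mem_inter] at hx
    exact (Finset.disjoint_left.mp hdisj hx.1) hx.2
  -- fibers over G
  have fiberG : ∀ B ∈ G,
      ((powersetCard k S).filter (fun A => Disjoint A B)).card = (n - l).choose k := by
    intro B hB
    have hfib : (powersetCard k S).filter (fun A => Disjoint A B)
        = powersetCard k (S \ B) := by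
      ext A
      simp only [Finset.mem_filter, Finset.mem_powersetCard, Finset.subset_sdiff]
      tauto
    have hB' := hG hB
    rw [Finset.mem_powersetCard] at hB'
    rw [hfib, Finset.card_powersetCard, Finset.card_sdiff_of_subset hB'.1, hScard, hB'.2]
  -- double counting via the filtered product
  set E : Finset (Finset ℕ × Finset ℕ) :=
    (G ×ˢ powersetCard k S).filter (fun p => Disjoint p.2 p.1) with hE
  have hE1 : E.card = G.card * (n - l).choose k := by
    have : E.card = ∑ B ∈ G, ((powersetCard k S).filter (fun A => Disjoint A B)).card := by
      rw [hE, Finset.card_filter, Finset.sum_product]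
      refine Finset.sum_congr rfl fun B _ => ?_
      rw [Finset.card_filter]
    rw [this, Finset.sum_congr rfl fiberG, Finset.sum_const, smul_eq_mul]
  have hE2 : E.card ≤ D.card * (n - k).choose l := by
    have h1 : E.card = ∑ A ∈ powersetCard k S, (G.filter (fun B => Disjoint A B)).card := by
      rw [hE, Finset.card_filter, Finset.sum_product_right]
      refine Finset.sum_congr rfl fun A _ => ?_
      rw [Finset.card_filter]
    have h2 : ∑ A ∈ powersetCard k S, (G.filter (fun B => Disjoint A B)).card
        = ∑ A ∈ D, (G.filter (fun B => Disjoint A B)).card := by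
      refine (Finset.sum_subset (Finset.filter_subset _ _) ?_).symm
      intro A hA hA'
      rw [Finset.mem_filter] at hA'
      push_neg at hA'
      rw [Finset.card_eq_zero, Finset.filter_eq_empty_iff]
      intro B hB hdisj
      exact hA' hA B hB hdisj
    have h3 : ∀ A ∈ D, (G.filter (fun B => Disjoint A B)).card ≤ (n - k).choose l := by
      intro A hA
      rw [hD, Finset.mem_filter, Finset.mem_powersetCard] at hA
      have hsub : G.filter (fun B => Disjoint A B) ⊆ powersetCard l (S \ A) := by
        intro B hB
        rw [Finset.mem_filter] at hB
        have hB' := hG hB.1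
        rw [Finset.mem_powersetCard] at hB' ⊢
        exact ⟨Finset.subset_sdiff.mpr ⟨hB'.1, hB.2.symm⟩, hB'.2⟩
      calc (G.filter (fun B => Disjoint A B)).card
          ≤ (powersetCard l (S \ A)).card := Finset.card_le_card hsub
        _ = (n - k).choose l := by
            rw [Finset.card_powersetCard, Finset.card_sdiff_of_subset hA.1.1, hScard, hA.1.2]
    calc E.card = ∑ A ∈ D, (G.filter (fun B => Disjoint A B)).card := by rw [h1, h2]
      _ ≤ ∑ A ∈ D, (n - k).choose l := Finset.sum_le_sum h3
      _ = D.card * (n - k).choose l := by rw [Finset.sum_const, smul_eq_mul]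
  -- binomial inequality
  have hchoose : (n - k).choose l ≤ (n - l).choose k := by
    have hkl : l ≤ n - k := le_tsub_of_add_le_left hn
    have hlk' : k ≤ n - l := le_tsub_of_add_le_right hn
    have heq : n - k - l = n - l - k := by omega
    calc (n - k).choose l = (n - k).choose (n - k - l) := (Nat.choose_symm hkl).symm
      _ ≤ (n - l).choose (n - k - l) := Nat.choose_le_choose _ (by omega)
      _ = (n - l).choose k := by rw [heq]; exact Nat.choose_symm hlk'
  -- |G| ≤ |D|
  have hGD : G.card ≤ D.card := by
    have hpos : 0 < (n - l).choose k :=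
      Nat.choose_pos (le_tsub_of_add_le_right hn)
    have : G.card * (n - l).choose k ≤ D.card * (n - l).choose k := by
      calc G.card * (n - l).choose k = E.card := hE1.symm
        _ ≤ D.card * (n - k).choose l := hE2
        _ ≤ D.card * (n - l).choose k := Nat.mul_le_mul_left _ hchoose
    exact Nat.le_of_mul_le_mul_right this hpos
  -- conclude
  calc F.card + G.card ≤ F.card + D.card := by omega
    _ = (F ∪ D).card := (Finset.card_union_of_disjoint hFD).symm
    _ ≤ (powersetCard k S).card := Finset.card_le_card
        (Finset.union_subset hF (Finset.filter_subset _ _))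
    _ = n.choose k := by rw [Finset.card_powersetCard, hScard]
end
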